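/- Let G be a finite simple graph whose vertex set can be partitioned into two sets A and B such that the subgraph of G induced by A is a comparability graph and B is an independent set in G. Then G is permutationally 1-11-representable. -/

import Mathlib

/-!
Restricted to `{x, y}`, a concatenation of permutations is a sequence of blocks `xy` and `yx`, and
the occurrences of `11` are exactly the places where two consecutive blocks differ. So it suffices
to find permutations in which adjacent pairs change their relative order at most once and
nonadjacent pairs at least twice.

Let `ρ` be a linear extension of the order on `A`. Alternating "`A` by `ρ`, then `B`" with
"`A` by a linear extension reversing an incomparable pair, then `B` reversed" switches every
nonadjacent pair inside `A` and every pair inside `B` twice, and no comparable pair. Then the block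
`B` moves down through `A` one vertex at a time, so every pair `a ∈ A`, `b ∈ B` switches exactly
once; while `B` sits right after `a`, the non-neighbours of `a` jump in front of `a` and back.
-/

/-- The subsequence of `w` consisting of all occurrences of `x` and `y`. -/
def restrictWord {V : Type*} [DecidableEq V] (w : List V) (x y : V) : List V :=
  w.filter (fun z => decide (z = x ∨ z = y))

/-- The number of occurrences of the consecutive pattern 11 in a word:
the number of indices `i` such that the `i`-th and `(i+1)`-th letters are equal. -/
def pattern11Count {V : Type*} [DecidableEq V] (l : List V) : ℕ :=
  ((l.zip l.tail).filter (fun p => decide (p.1 = p.2))).length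

/-- A word `w` over `V` `k`-11-represents the simple graph `G` if every vertex occurs in `w`
and, for all distinct `x y`, `xy` is an edge iff `w|_{x,y}` has at most `k` occurrences of
the pattern 11. -/
def Represents {V : Type*} [DecidableEq V] (k : ℕ) (w : List V) (G : SimpleGraph V) : Prop :=
  (∀ v : V, v ∈ w) ∧
  ∀ x y : V, x ≠ y → (G.Adj x y ↔ pattern11Count (restrictWord w x y) ≤ k)

/-- A graph is `k`-11-representable if some word `k`-11-represents it. -/
def Representable {V : Type*} [DecidableEq V] (k : ℕ) (G : SimpleGraph V) : Prop :=
  ∃ w : List V, Represents k w G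

/-- A word that is a permutation of the vertex set: each vertex occurs exactly once. -/
def IsPermWord {V : Type*} (p : List V) : Prop :=
  p.Nodup ∧ ∀ v : V, v ∈ p

/-- A graph is permutationally `k`-11-representable if some concatenation of permutations
of the vertex set `k`-11-represents it. -/
def PermRepresentable {V : Type*} [DecidableEq V] (k : ℕ) (G : SimpleGraph V) : Prop :=
  ∃ ps : List (List V), (∀ p ∈ ps, IsPermWord p) ∧ Represents k ps.flatten G

open Function

def switches : List Bool → ℕ
  | a :: b :: l => (if a = b then 0 else 1) + switches (b :: l)
  | _ => 0

theorem switches_le_cons (a : Bool) (l : List Bool) : switches l ≤ switches (a :: l) := by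
  cases l <;> simp [switches]

theorem switches_le_append (l t : List Bool) : switches l ≤ switches (l ++ t) := by
  induction l using switches.induct with
  | case1 a b l ih => simpa [switches] using ih
  | case2 l h => cases l <;> simp [switches]

theorem switches_le_of_infix {l₁ l₂ : List Bool} (h : l₁ <:+: l₂) : switches l₁ ≤ switches l₂ := by
  obtain ⟨s, t, rfl⟩ := h
  induction s with
  | nil => exact switches_le_append l₁ t
  | cons a s ih => exact ih.trans (switches_le_cons a _)

theorem two_le_switches_of_infix {l : List Bool} {c : Bool} (h : [c, !c, c] <:+: l) :
    2 ≤ switches l :=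
  (switches_le_of_infix h).trans' (by cases c <;> decide)

theorem switches_eq_zero_of_forall_eq {l : List Bool} {c : Bool} (h : ∀ b ∈ l, b = c) :
    switches l = 0 := by
  induction l using switches.induct with
  | case1 a b l ih =>
    rw [switches, if_pos ((h a (by simp)).trans (h b (by simp)).symm), zero_add]
    exact ih fun x hx => h x (List.mem_cons_of_mem a hx)
  | case2 l h' => cases l <;> simp [switches]

theorem switches_le_one_of_pairwise_ge {l : List Bool} (h : l.Pairwise (· ≥ ·)) :
    switches l ≤ 1 := by
  induction l using switches.induct with
  | case1 a b l ih =>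
    obtain ⟨hab, hbl⟩ := List.pairwise_cons.1 h
    by_cases hb : a = b
    · simpa [switches, hb] using ih hbl
    · have hfalse : b = false := by
        have hba := hab b List.mem_cons_self
        cases a <;> cases b <;> first | rfl | exact absurd rfl hb | exact absurd hba (by decide)
      have : switches (b :: l) = 0 := switches_eq_zero_of_forall_eq (c := false) fun x hx => by
        rcases List.mem_cons.1 hx with rfl | hx
        · exact hfalse
        · exact Bool.eq_false_of_le_false (hfalse ▸ (List.pairwise_cons.1 hbl).1 x hx)
      simp [switches, hb, this]
  | case2 l h' => cases l <;> simp [switches]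

section Words

variable {V : Type*} [DecidableEq V]

theorem restrictWord_comm (w : List V) (x y : V) : restrictWord w x y = restrictWord w y x := by
  simp only [restrictWord, or_comm]

theorem restrictWord_flatten (ps : List (List V)) (x y : V) :
    restrictWord ps.flatten x y = (ps.map fun p => restrictWord p x y).flatten :=
  List.filter_flatten

theorem restrictWord_eq_pair_or {w : List V} {x y : V} (hw : w.Nodup) (hx : x ∈ w) (hy : y ∈ w)
    (hxy : x ≠ y) : restrictWord w x y = [x, y] ∨ restrictWord w x y = [y, x] := by
  refine List.perm_pair.1 ((List.perm_ext_iff_of_nodup (hw.filter _) (by simp [hxy])).2 ?_)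
  intro z
  simp only [List.mem_filter, decide_eq_true_eq, List.mem_cons, List.not_mem_nil,
    or_false]
  constructor
  · exact And.right
  · rintro (rfl | rfl) <;> simp [*]

theorem pattern11Count_cons_cons (a b : V) (l : List V) :
    pattern11Count (a :: b :: l) = (if a = b then 1 else 0) + pattern11Count (b :: l) := by
  by_cases h : a = b <;> simp [pattern11Count, h, add_comm]

def pairWord (x y : V) (b : Bool) : List V := if b then [x, y] else [y, x]

theorem pattern11Count_flatten_pairWord {x y : V} (hxy : x ≠ y) (bs : List Bool) :
    pattern11Count (bs.map (pairWord x y)).flatten = switches bs := by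
  induction bs using switches.induct with
  | case1 b b' l ih =>
    simp only [List.map_cons, List.flatten_cons] at ih ⊢
    cases b <;> cases b' <;>
      simp_all [pairWord, pattern11Count_cons_cons, switches, hxy.symm]
  | case2 l h =>
    rcases l with _ | ⟨b, _ | ⟨b', l⟩⟩
    · rfl
    · cases b <;> simp [pairWord, switches, hxy, hxy.symm, pattern11Count]
    · exact absurd rfl (h b b' l)

end Words

section KeyPermutations

variable {V K : Type*} [LinearOrder K]

def beforeSeq (ks : List (V → K)) (x y : V) : List Bool :=
  ks.map fun k => decide (k x < k y)

theorem two_le_switches_beforeSeq_of_infix {ks : List (V → K)} {k k' : V → K} {x y : V}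
    (h : [k, k', k] <:+: ks) (hrev : k' x < k' y ↔ ¬ k x < k y) :
    2 ≤ switches (beforeSeq ks x y) :=
  two_le_switches_of_infix (c := decide (k x < k y)) <| by
    simpa only [beforeSeq, List.map_cons, List.map_nil, decide_eq_decide.2 hrev, decide_not] using
      h.map fun k => decide (k x < k y)

variable [Fintype V]

noncomputable def keyPerm (k : V → K) : List V :=
  (Finset.univ : Finset V).toList.mergeSort fun a b => decide (k a ≤ k b)

theorem isPermWord_keyPerm (k : V → K) : IsPermWord (keyPerm k) := by
  have hperm := List.mergeSort_perm (Finset.univ : Finset V).toList fun a b => decide (k a ≤ k b)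
  exact ⟨hperm.nodup_iff.2 (Finset.nodup_toList _),
    fun v => hperm.mem_iff.2 (Finset.mem_toList.2 (Finset.mem_univ v))⟩

variable [DecidableEq V]

theorem restrictWord_keyPerm {k : V → K} (hk : Injective k) {x y : V} (hxy : x ≠ y) :
    restrictWord (keyPerm k) x y = pairWord x y (decide (k x < k y)) := by
  have hsorted : (restrictWord (keyPerm k) x y).Pairwise fun a b => k a ≤ k b := by
    refine (List.Pairwise.sublist List.filter_sublist ?_)
    simpa [keyPerm] using List.pairwise_mergeSort (le := fun a b => decide (k a ≤ k b))
      (fun _ _ _ hab hbc => by simpa using le_trans (by simpa using hab) (by simpa using hbc))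
      (fun a b => by simpa using le_total (k a) (k b)) _
  obtain ⟨hnd, hmem⟩ := isPermWord_keyPerm k
  rcases restrictWord_eq_pair_or hnd (hmem x) (hmem y) hxy with h | h <;> rw [h] at hsorted ⊢
  · simp [pairWord, lt_of_le_of_ne (by simpa using hsorted) (hk.ne hxy)]
  · simp [pairWord, not_lt_of_ge (by simpa using hsorted)]

theorem pattern11Count_restrictWord_keyPerm {ks : List (V → K)} (hks : ∀ k ∈ ks, Injective k)
    {x y : V} (hxy : x ≠ y) :
    pattern11Count (restrictWord (ks.map keyPerm).flatten x y) = switches (beforeSeq ks x y) := by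
  rw [← pattern11Count_flatten_pairWord hxy, restrictWord_flatten, beforeSeq, List.map_map,
    List.map_map]
  congr 2
  exact List.map_congr_left fun k hk => restrictWord_keyPerm (hks k hk) hxy

theorem switches_beforeSeq_comm {ks : List (V → K)} (hks : ∀ k ∈ ks, Injective k) {x y : V}
    (hxy : x ≠ y) : switches (beforeSeq ks x y) = switches (beforeSeq ks y x) := by
  rw [← pattern11Count_restrictWord_keyPerm hks hxy,
    ← pattern11Count_restrictWord_keyPerm hks hxy.symm, restrictWord_comm]

theorem permRepresentable_of_keys {m : ℕ} (G : SimpleGraph V) (ks : List (V → K))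
    (hks : ∀ k ∈ ks, Injective k) (hne : ks ≠ [])
    (hadj : ∀ x y, x ≠ y → (G.Adj x y ↔ switches (beforeSeq ks x y) ≤ m)) :
    PermRepresentable m G := by
  refine ⟨ks.map keyPerm, by simpa using fun k _ => isPermWord_keyPerm k, fun v => ?_,
    fun x y hxy => by rw [pattern11Count_restrictWord_keyPerm hks hxy]; exact hadj x y hxy⟩
  obtain ⟨k, hk⟩ := List.exists_mem_of_ne_nil ks hne
  exact List.mem_flatten.2 ⟨keyPerm k, List.mem_map_of_mem hk, (isPermWord_keyPerm k).2 v⟩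

end KeyPermutations

section Ranks

variable {V : Type*} [Fintype V]

theorem exists_linearExtension_rank (le : V → V → Prop) [IsPartialOrder V le] :
    ∃ f : V → ℕ, Injective f ∧ (∀ x y, le x y → f x ≤ f y) ∧ ∀ x, f x < Fintype.card V := by
  classical
  obtain ⟨s, hs, hle⟩ := extend_partialOrder le
  let below : V → Finset V := fun x => {z | ¬ s x z}
  have below_mono : ∀ x y, s x y → below x ⊆ below y := fun x y hxy z hz => by
    simp only [below, Finset.mem_filter, Finset.mem_univ, true_and] at hz ⊢
    exact fun hyz => hz (_root_.trans hxy hyz)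
  have not_mem_below : ∀ x, x ∉ below x := fun x => by simp [below, refl_of s x]
  refine ⟨fun x => (below x).card, fun x y hxy => ?_,
    fun x y h => Finset.card_le_card (below_mono x y (hle x y h)),
    fun x => Finset.card_lt_univ_of_notMem (not_mem_below x)⟩
  wlog h : s x y generalizing x y
  · exact (this y x hxy.symm ((total_of s x y).resolve_left h)).symm
  have heq := Finset.eq_of_subset_of_card_le (below_mono x y h) hxy.ge
  have : x ∉ below y := heq ▸ not_mem_below x
  exact antisymm h (by simpa [below] using this)

theorem exists_linearExtension_rank_of_not_le (le : V → V → Prop) [IsPartialOrder V le] {u v : V}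
    (huv : ¬ le u v) :
    ∃ f : V → ℕ, Injective f ∧ (∀ x y, le x y → f x ≤ f y) ∧ (∀ x, f x < Fintype.card V) ∧
      f v < f u := by
  -- adjoin `v ≤ u`; since `u ≰ v` this is still a partial order
  let le' x y := le x y ∨ le x v ∧ le u y
  have : IsPartialOrder V le' :=
    { refl := fun x => Or.inl (refl x)
      trans := by
        rintro x y z (hxy | ⟨hxv, huy⟩) (hyz | ⟨hyv, huz⟩)
        · exact Or.inl (_root_.trans hxy hyz)
        · exact Or.inr ⟨_root_.trans hxy hyv, huz⟩
        · exact Or.inr ⟨hxv, _root_.trans huy hyz⟩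
        · exact absurd (_root_.trans huy hyv) huv
      antisymm := by
        rintro x y (hxy | ⟨hxv, huy⟩) (hyx | ⟨hyv, hux⟩)
        · exact antisymm hxy hyx
        · exact absurd (_root_.trans hux (_root_.trans hxy hyv)) huv
        · exact absurd (_root_.trans huy (_root_.trans hyx hxv)) huv
        · exact absurd (_root_.trans huy hyv) huv }
  obtain ⟨f, hf, hmono, hlt⟩ := exists_linearExtension_rank le'
  refine ⟨f, hf, fun x y h => hmono x y (Or.inl h), hlt,
    lt_of_le_of_ne (hmono v u (Or.inr ⟨refl v, refl u⟩)) (hf.ne ?_)⟩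
  rintro rfl
  exact huv (refl v)

end Ranks

section LayerKeys

variable {V : Type*} {A : Set V} {f : V → ℕ} {pos g : V → ℤ} {x y : V}

open Classical in
/-- Places each `b ∉ A` right after the vertices `a ∈ A` with `f a ≤ pos b`; ties among the
vertices outside `A` are broken by `g`. -/
noncomputable def layerKey (A : Set V) (f : V → ℕ) (pos g : V → ℤ) (x : V) : ℤ ×ₗ ℤ :=
  if x ∈ A then toLex (2 * (f x : ℤ), 0) else toLex (2 * pos x + 1, g x)

theorem layerKey_injective (hf : Injective f) (hg : Injective g) :
    Injective (layerKey A f pos g) := by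
  intro x y h
  unfold layerKey at h
  split_ifs at h <;> simp only [toLex_inj, Prod.mk.injEq] at h
  · exact hf (by omega)
  · omega
  · omega
  · exact hg h.2

theorem layerKey_lt_iff_of_mem (hx : x ∈ A) (hy : y ∈ A) :
    layerKey A f pos g x < layerKey A f pos g y ↔ f x < f y := by
  simp [layerKey, hx, hy, Prod.Lex.toLex_lt_toLex]

theorem layerKey_lt_iff_of_mem_of_notMem (hx : x ∈ A) (hy : y ∉ A) :
    layerKey A f pos g x < layerKey A f pos g y ↔ (f x : ℤ) ≤ pos y := by
  simp only [layerKey, hx, hy, if_true, if_false, Prod.Lex.toLex_lt_toLex]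
  omega

theorem layerKey_lt_iff_of_notMem (hx : x ∉ A) (hy : y ∉ A) (hpos : pos x = pos y) :
    layerKey A f pos g x < layerKey A f pos g y ↔ g x < g y := by
  simp [layerKey, hx, hy, Prod.Lex.toLex_lt_toLex, hpos]

end LayerKeys

/-- `rank` linearly extends the comparability order of `G` on `A`, and so does each
`revRank (a, b)`, which moreover puts `b` before `a` when `a, b ∈ A` are nonadjacent. -/
structure Ranking {V : Type*} (G : SimpleGraph V) (A : Set V) (n : ℕ) where
  rank : V → ℕ
  revRank : V × V → V → ℕ
  rank_injective : Injective rank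
  revRank_injective : ∀ p, Injective (revRank p)
  rank_lt : ∀ x, rank x < n
  revRank_lt : ∀ p x, revRank p x < n
  revRank_lt_revRank : ∀ p, ∀ a ∈ A, ∀ b ∈ A, G.Adj a b → rank a < rank b →
    revRank p a < revRank p b
  revRank_swap : ∀ a ∈ A, ∀ b ∈ A, a ≠ b → ¬ G.Adj a b → revRank (a, b) b < revRank (a, b) a

theorem Ranking.nonempty_of_comparability {V : Type*} [Fintype V] {G : SimpleGraph V} {A : Set V}
    (lt : V → V → Prop) (htrans : ∀ a ∈ A, ∀ b ∈ A, ∀ c ∈ A, lt a b → lt b c → lt a c)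
    (hirrefl : ∀ a ∈ A, ¬ lt a a)
    (hadj : ∀ a ∈ A, ∀ b ∈ A, a ≠ b → (G.Adj a b ↔ (lt a b ∨ lt b a))) :
    Nonempty (Ranking G A (Fintype.card V)) := by
  let le : V → V → Prop := fun x y => x = y ∨ x ∈ A ∧ y ∈ A ∧ lt x y
  have : IsPartialOrder V le :=
    { refl := fun x => Or.inl rfl
      trans := by
        rintro x y z (rfl | ⟨hx, hy, hxy⟩) (rfl | ⟨hy', hz, hyz⟩)
        · exact Or.inl rfl
        · exact Or.inr ⟨hy', hz, hyz⟩
        · exact Or.inr ⟨hx, hy, hxy⟩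
        · exact Or.inr ⟨hx, hz, htrans x hx y hy z hz hxy hyz⟩
      antisymm := by
        rintro x y (rfl | ⟨hx, hy, hxy⟩) (hyx | ⟨-, -, hyx⟩)
        · rfl
        · rfl
        · exact hyx.symm
        · exact absurd (htrans x hx y hy x hx hxy hyx) (hirrefl x hx) }
  have rank_lt_rank : ∀ f : V → ℕ, Injective f → (∀ x y, le x y → f x ≤ f y) →
      ∀ a ∈ A, ∀ b ∈ A, lt a b → f a < f b := fun f hf hmono a ha b hb hab =>
    lt_of_le_of_ne (hmono a b (Or.inr ⟨ha, hb, hab⟩))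
      (hf.ne (by rintro rfl; exact hirrefl a ha hab))
  obtain ⟨ρ, hρ, hρle, hρn⟩ := exists_linearExtension_rank le
  have hrev : ∀ p : V × V, ∃ f : V → ℕ, Injective f ∧ (∀ x y, le x y → f x ≤ f y) ∧
      (∀ x, f x < Fintype.card V) ∧ (¬ le p.1 p.2 → f p.2 < f p.1) := fun p => by
    by_cases h : le p.1 p.2
    · exact ⟨ρ, hρ, hρle, hρn, absurd h⟩
    · obtain ⟨f, hf, hmono, hn, hswap⟩ := exists_linearExtension_rank_of_not_le le h
      exact ⟨f, hf, hmono, hn, fun _ => hswap⟩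
  choose τ hτ hτle hτn hτswap using hrev
  refine ⟨⟨ρ, τ, hρ, hτ, hρn, hτn, ?_, ?_⟩⟩
  · intro p a ha b hb hab hρab
    rcases (hadj a ha b hb hab.ne).1 hab with h | h
    · exact rank_lt_rank (τ p) (hτ p) (hτle p) a ha b hb h
    · exact absurd hρab (rank_lt_rank ρ hρ hρle b hb a ha h).asymm
  · intro a ha b hb hne hnadj
    refine hτswap (a, b) ?_
    rintro (h | ⟨-, -, h⟩)
    · exact hne h
    · exact hnadj ((hadj a ha b hb hne).2 (Or.inl h))

namespace Ranking

variable {V : Type*} {G : SimpleGraph V} {A : Set V} {n : ℕ} (R : Ranking G A n) {a b : V}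

noncomputable def sweepKey (t : ℕ) : V → ℤ ×ₗ ℤ :=
  layerKey A R.rank (fun _ => t) (fun x => R.rank x)

open Classical in
noncomputable def wiggleKey (t : ℕ) : V → ℤ ×ₗ ℤ :=
  layerKey A R.rank (fun b => if ∃ a ∈ A, R.rank a = t ∧ ¬ G.Adj a b then t - 1 else t)
    (fun x => R.rank x)

noncomputable def revKey (p : V × V) : V → ℤ ×ₗ ℤ :=
  layerKey A (R.revRank p) (fun _ => n) (fun x => -R.rank x)

theorem revRank_lt_revRank_iff (ha : a ∈ A) (hb : b ∈ A) (hadj : G.Adj a b) (p : V × V) :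
    R.revRank p a < R.revRank p b ↔ R.rank a < R.rank b := by
  refine ⟨fun h => ?_, R.revRank_lt_revRank p a ha b hb hadj⟩
  by_contra hρ
  have hρ' := lt_of_le_of_ne (not_lt.1 hρ) (R.rank_injective.ne hadj.ne.symm)
  exact (R.revRank_lt_revRank p b hb a ha hadj.symm hρ').asymm h

theorem revKey_lt_of_mem_of_notMem (ha : a ∈ A) (hb : b ∉ A) (p : V × V) :
    R.revKey p a < R.revKey p b := by
  rw [revKey, layerKey_lt_iff_of_mem_of_notMem ha hb]
  exact_mod_cast (R.revRank_lt p a).le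

theorem sweepKey_lt_iff (ha : a ∈ A) (hb : b ∉ A) (t : ℕ) :
    R.sweepKey t a < R.sweepKey t b ↔ R.rank a ≤ t := by
  rw [sweepKey, layerKey_lt_iff_of_mem_of_notMem ha hb, Nat.cast_le]

theorem wiggleKey_lt_iff_of_adj (ha : a ∈ A) (hb : b ∉ A) (hadj : G.Adj a b) (t : ℕ) :
    R.wiggleKey t a < R.wiggleKey t b ↔ R.rank a ≤ t := by
  rw [wiggleKey, layerKey_lt_iff_of_mem_of_notMem ha hb]
  split_ifs with h
  · obtain ⟨a', -, rfl, hna'⟩ := h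
    have : R.rank a ≠ R.rank a' := R.rank_injective.ne (by rintro rfl; exact hna' hadj)
    omega
  · exact Nat.cast_le

theorem not_wiggleKey_lt_of_not_adj (ha : a ∈ A) (hb : b ∉ A) (hnadj : ¬ G.Adj a b) :
    ¬ R.wiggleKey (R.rank a) a < R.wiggleKey (R.rank a) b := by
  rw [wiggleKey, layerKey_lt_iff_of_mem_of_notMem ha hb, if_pos ⟨a, ha, rfl, hnadj⟩]
  omega

variable [Fintype V]

noncomputable def keySchedule : List (V → ℤ ×ₗ ℤ) :=
  (Finset.univ : Finset (V × V)).toList.flatMap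
      (fun p => [R.sweepKey n, R.revKey p, R.sweepKey n]) ++
    (List.range (n + 1)).reverse.flatMap fun t => [R.sweepKey t, R.wiggleKey t, R.sweepKey t]

theorem mem_keySchedule {k : V → ℤ ×ₗ ℤ} :
    k ∈ R.keySchedule ↔
      (∃ p, k = R.revKey p) ∨ ∃ t ≤ n, k = R.sweepKey t ∨ k = R.wiggleKey t := by
  simp only [keySchedule, List.mem_append, List.mem_flatMap, Finset.mem_toList, Finset.mem_univ,
    true_and, List.mem_reverse, List.mem_range, Nat.lt_succ_iff, List.mem_cons, List.not_mem_nil,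
    or_false]
  constructor
  · rintro (⟨p, h | h | h⟩ | ⟨t, ht, h | h | h⟩)
    · exact Or.inr ⟨n, le_rfl, Or.inl h⟩
    · exact Or.inl ⟨p, h⟩
    · exact Or.inr ⟨n, le_rfl, Or.inl h⟩
    · exact Or.inr ⟨t, ht, Or.inl h⟩
    · exact Or.inr ⟨t, ht, Or.inr h⟩
    · exact Or.inr ⟨t, ht, Or.inl h⟩
  · rintro (⟨p, h⟩ | ⟨t, ht, h | h⟩)
    · exact Or.inl ⟨p, Or.inr (Or.inl h)⟩
    · exact Or.inr ⟨t, ht, Or.inl h⟩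
    · exact Or.inr ⟨t, ht, Or.inr (Or.inl h)⟩

theorem keySchedule_injective : ∀ k ∈ R.keySchedule, Injective k := by
  intro k hk
  have hρ : Injective fun x => (R.rank x : ℤ) := Nat.cast_injective.comp R.rank_injective
  rcases R.mem_keySchedule.1 hk with ⟨p, rfl⟩ | ⟨t, -, rfl | rfl⟩
  · exact layerKey_injective (R.revRank_injective p) (neg_injective.comp hρ)
  · exact layerKey_injective R.rank_injective hρ
  · exact layerKey_injective R.rank_injective hρ

theorem keySchedule_ne_nil : R.keySchedule ≠ [] := by
  simp [keySchedule, List.range_succ]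

theorem revKey_infix_keySchedule (p : V × V) :
    [R.sweepKey n, R.revKey p, R.sweepKey n] <:+: R.keySchedule := by
  rw [keySchedule, List.flatMap_def]
  exact (List.infix_of_mem_flatten (List.mem_map_of_mem
    (f := fun p => [R.sweepKey n, R.revKey p, R.sweepKey n]) (by simp))).trans
    (List.prefix_append _ _).isInfix

theorem wiggleKey_infix_keySchedule {t : ℕ} (ht : t ≤ n) :
    [R.sweepKey t, R.wiggleKey t, R.sweepKey t] <:+: R.keySchedule := by
  rw [keySchedule, List.flatMap_def (l := (List.range (n + 1)).reverse)]
  exact (List.infix_of_mem_flatten (List.mem_map_of_mem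
    (f := fun t => [R.sweepKey t, R.wiggleKey t, R.sweepKey t]) (by simpa [Nat.lt_succ_iff]))).trans
    (List.suffix_append _ _).isInfix

theorem switches_eq_zero_of_adj_of_mem (ha : a ∈ A) (hb : b ∈ A) (hadj : G.Adj a b) :
    switches (beforeSeq R.keySchedule a b) = 0 := by
  refine switches_eq_zero_of_forall_eq (c := decide (R.rank a < R.rank b)) fun c hc => ?_
  obtain ⟨k, hk, rfl⟩ := List.mem_map.1 hc
  rcases R.mem_keySchedule.1 hk with ⟨p, rfl⟩ | ⟨t, -, rfl | rfl⟩ <;>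
    simp only [revKey, sweepKey, wiggleKey, layerKey_lt_iff_of_mem ha hb,
      R.revRank_lt_revRank_iff ha hb hadj]

theorem two_le_switches_of_not_adj_of_mem (ha : a ∈ A) (hb : b ∈ A) (hne : a ≠ b)
    (hnadj : ¬ G.Adj a b) : 2 ≤ switches (beforeSeq R.keySchedule a b) := by
  rcases lt_or_gt_of_ne (R.rank_injective.ne hne) with hlt | hlt
  · refine two_le_switches_beforeSeq_of_infix (R.revKey_infix_keySchedule (a, b)) ?_
    simp only [revKey, sweepKey, layerKey_lt_iff_of_mem ha hb, hlt, not_true, iff_false, not_lt]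
    exact (R.revRank_swap a ha b hb hne hnadj).le
  · refine two_le_switches_beforeSeq_of_infix (R.revKey_infix_keySchedule (b, a)) ?_
    simp only [revKey, sweepKey, layerKey_lt_iff_of_mem ha hb, not_lt.2 hlt.le, not_false_iff,
      iff_true]
    exact R.revRank_swap b hb a ha hne.symm fun h => hnadj h.symm

theorem pairwise_beforeSeq_of_adj_of_notMem (ha : a ∈ A) (hb : b ∉ A) (hadj : G.Adj a b) :
    (beforeSeq R.keySchedule a b).Pairwise (· ≥ ·) := by
  simp only [beforeSeq, keySchedule, List.map_append, List.map_flatMap, List.map_cons,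
    List.map_nil, R.revKey_lt_of_mem_of_notMem ha hb, R.sweepKey_lt_iff ha hb,
    R.wiggleKey_lt_iff_of_adj ha hb hadj, (R.rank_lt a).le, decide_true]
  refine List.pairwise_append.2 ⟨?_, List.pairwise_flatMap.2 ⟨fun t _ => by simp, ?_⟩, ?_⟩
  · exact List.pairwise_of_forall_mem_list fun x _ y hy => by simp_all
  · refine List.pairwise_reverse.2 (List.pairwise_lt_range.imp fun {s t} hst => ?_)
    simp only [List.mem_cons, List.not_mem_nil, or_false, or_self, forall_eq, ge_iff_le,
      Bool.le_iff_imp, decide_eq_true_eq]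
    omega
  · intro x _ y _
    simp_all

theorem two_le_switches_of_not_adj_of_notMem (ha : a ∈ A) (hb : b ∉ A) (hnadj : ¬ G.Adj a b) :
    2 ≤ switches (beforeSeq R.keySchedule a b) := by
  refine two_le_switches_beforeSeq_of_infix (R.wiggleKey_infix_keySchedule (R.rank_lt a).le) ?_
  simp only [R.sweepKey_lt_iff ha hb, le_rfl, not_true, iff_false]
  exact R.not_wiggleKey_lt_of_not_adj ha hb hnadj

theorem two_le_switches_of_notMem_of_notMem (ha : a ∉ A) (hb : b ∉ A) (hne : a ≠ b) :
    2 ≤ switches (beforeSeq R.keySchedule a b) := by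
  refine two_le_switches_beforeSeq_of_infix (R.revKey_infix_keySchedule (a, b)) ?_
  rw [revKey, sweepKey, layerKey_lt_iff_of_notMem ha hb rfl, layerKey_lt_iff_of_notMem ha hb rfl,
    neg_lt_neg_iff, Nat.cast_lt, Nat.cast_lt]
  exact ⟨lt_asymm, fun h => lt_of_le_of_ne (not_lt.1 h) (R.rank_injective.ne hne.symm)⟩

theorem adj_iff_switches_le_one_of_mem (ha : a ∈ A) (hne : a ≠ b) :
    G.Adj a b ↔ switches (beforeSeq R.keySchedule a b) ≤ 1 := by
  by_cases hb : b ∈ A <;> by_cases hadj : G.Adj a b <;>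
    simp only [hadj, true_iff, false_iff, not_le]
  · exact (R.switches_eq_zero_of_adj_of_mem ha hb hadj).trans_le zero_le_one
  · exact R.two_le_switches_of_not_adj_of_mem ha hb hne hadj
  · exact switches_le_one_of_pairwise_ge (R.pairwise_beforeSeq_of_adj_of_notMem ha hb hadj)
  · exact R.two_le_switches_of_not_adj_of_notMem ha hb hadj

variable [DecidableEq V]

theorem adj_iff_switches_le_one (hindep : ∀ x ∉ A, ∀ y ∉ A, ¬ G.Adj x y) {x y : V}
    (hxy : x ≠ y) : G.Adj x y ↔ switches (beforeSeq R.keySchedule x y) ≤ 1 := by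
  by_cases hx : x ∈ A
  · exact R.adj_iff_switches_le_one_of_mem hx hxy
  by_cases hy : y ∈ A
  · rw [G.adj_comm, switches_beforeSeq_comm R.keySchedule_injective hxy]
    exact R.adj_iff_switches_le_one_of_mem hy hxy.symm
  simp only [hindep x hx y hy, false_iff, not_le]
  exact R.two_le_switches_of_notMem_of_notMem hx hy hxy

end Ranking

theorem stmt6_general {V : Type*} [Fintype V] [DecidableEq V] (G : SimpleGraph V)
    (A B : Set V) (hcover : A ∪ B = Set.univ)
    (hcomp : ∃ lt : V → V → Prop,
      (∀ a ∈ A, ∀ b ∈ A, ∀ c ∈ A, lt a b → lt b c → lt a c) ∧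
      (∀ a ∈ A, ¬ lt a a) ∧
      (∀ a ∈ A, ∀ b ∈ A, a ≠ b → (G.Adj a b ↔ (lt a b ∨ lt b a))))
    (hindep : ∀ x ∈ B, ∀ y ∈ B, ¬ G.Adj x y) :
    PermRepresentable 1 G := by
  obtain ⟨lt, htrans, hirrefl, hadj⟩ := hcomp
  obtain ⟨R⟩ := Ranking.nonempty_of_comparability lt htrans hirrefl hadj
  have hB : ∀ x ∉ A, x ∈ B := fun x hx =>
    ((Set.mem_union x A B).1 (hcover ▸ Set.mem_univ x)).resolve_left hx
  exact permRepresentable_of_keys G R.keySchedule R.keySchedule_injective R.keySchedule_ne_nil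
    fun x y hxy => R.adj_iff_switches_le_one (fun x hx y hy => hindep x (hB x hx) y (hB y hy)) hxy

/-- if the vertex set of a finite graph `G` can be partitioned into a set `A`
inducing a comparability graph (there is a strict partial order on `A` such that two
distinct vertices of `A` are adjacent iff they are comparable) and an independent set `B`,
then `G` is permutationally 1-11-representable. -/
theorem stmt6 {V : Type*} [Fintype V] [DecidableEq V] (G : SimpleGraph V)
    (A B : Set V) (hcover : A ∪ B = Set.univ) (hdisj : Disjoint A B)
    (hcomp : ∃ lt : V → V → Prop,
      (∀ a ∈ A, ∀ b ∈ A, ∀ c ∈ A, lt a b → lt b c → lt a c) ∧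
      (∀ a ∈ A, ¬ lt a a) ∧
      (∀ a ∈ A, ∀ b ∈ A, a ≠ b → (G.Adj a b ↔ (lt a b ∨ lt b a))))
    (hindep : ∀ x ∈ B, ∀ y ∈ B, ¬ G.Adj x y) :
    PermRepresentable 1 G :=
  stmt6_general G A B hcover hcomp hindep
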